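/- arXiv:2204.05046 — 6 statements merged into one kernel-verified Lean document; each statement's English description precedes it below -/
import Mathlib

section
/- Let Ψ(t) = a_n t^n + ... + a_0 be a complex polynomial of degree n with roots z_1, ..., z_n ordered so that |z_1| ≥ |z_2| ≥ ... ≥ |z_n|. If the j-th elementary symmetric function of the roots vanishes, i.e. S_j = Σ_{S ⊆ {1,...,n}, |S|=j} Π_{i∈S} (-z_i) = 0, for some 1 ≤ j ≤ n-1, then |z_j| ≤ C(n,j) |z_{j+1}| where C(n,j) = n choose j. In particular |z_{j+1}| and |z_j| are comparable with constant depending only on n and j. -/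
/-!
Write `w₀, w₁, …, w_{n-1}` for the roots, with decreasing moduli, and `k + 1 = j`. The term
`w₀ ⋯ w_k` of `e_{k+1}(w)` is the product of the `k + 1` largest moduli; every other term
contains at least one factor `w_m` with `m ≥ k + 1`, so its modulus is at most
`|w₀ ⋯ w_{k-1}| · |w_{k+1}|`. If `e_{k+1}(w) = 0`, the leading term is minus the sum of the
`C(n, k+1) - 1` others, and cancelling the common factor `|w₀ ⋯ w_{k-1}|` (nonzero unless
`w_k = 0`) gives `|w_k| ≤ (C(n, k+1) - 1) |w_{k+1}|`.
-/

/-- The `j`-th elementary symmetric function of the (negated) elements of a multiset: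
`S j A = Σ_{|S|=j, S ⊆ A} Π_{z∈S} (-z)`. -/
noncomputable def S (A : Multiset ℂ) (j : ℕ) : ℂ :=
  ((Multiset.powersetCard j (A.map (fun z => -z))).map Multiset.prod).sum

open Finset

namespace Finset

variable {g : ℕ → ℝ} {n : ℕ}

theorem prod_le_prod_range_card_of_antitoneOn (hg0 : ∀ i, 0 ≤ g i)
    (hg : AntitoneOn g (Set.Iio n)) {T : Finset ℕ} (hT : T ⊆ range n) :
    ∏ i ∈ T, g i ≤ ∏ i ∈ range #T, g i := by
  induction T using Finset.induction_on_max with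
  | empty => simp
  | insert m T hlt ih =>
    have hmT : m ∉ T := fun h => lt_irrefl m (hlt m h)
    have hmn : m < n := mem_range.mp (hT (mem_insert_self m T))
    have hcard : #T ≤ m := by
      simpa using card_le_card (fun x hx => mem_range.mpr (hlt x hx) : T ⊆ range m)
    rw [prod_insert hmT, card_insert_of_notMem hmT, prod_range_succ,
      mul_comm (∏ i ∈ range #T, g i)]
    exact mul_le_mul (hg (by simp; omega) (by simpa using hmn) hcard)
      (ih ((subset_insert m T).trans hT)) (prod_nonneg fun i _ => hg0 i) (hg0 _)

theorem prod_le_prod_range_mul_of_ne_range (hg0 : ∀ i, 0 ≤ g i)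
    (hg : AntitoneOn g (Set.Iio n)) {k : ℕ} {T : Finset ℕ} (hT : T ⊆ range n)
    (hcard : #T = k + 1) (hne : T ≠ range (k + 1)) :
    ∏ i ∈ T, g i ≤ (∏ i ∈ range k, g i) * g (k + 1) := by
  obtain ⟨m, hmT, hkm⟩ : ∃ m ∈ T, k + 1 ≤ m := by
    by_contra! hsmall
    exact hne <|
      eq_of_subset_of_card_le (fun x hx => mem_range.mpr (hsmall x hx)) (by simp [hcard])
  have hmn : m < n := mem_range.mp (hT hmT)
  have hrest : ∏ i ∈ T.erase m, g i ≤ ∏ i ∈ range k, g i := by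
    simpa [card_erase_of_mem hmT, hcard] using
      prod_le_prod_range_card_of_antitoneOn hg0 hg ((erase_subset m T).trans hT)
  rw [← mul_prod_erase T g hmT, mul_comm]
  exact mul_le_mul hrest (hg (by simp; omega) (by simpa using hmn) hkm) (hg0 _)
    (prod_nonneg fun i _ => hg0 i)

end Finset

theorem norm_le_mul_norm_of_esymm_eq_zero {𝕜 : Type*} [NormedField 𝕜] {w : ℕ → 𝕜}
    {n k : ℕ} (hw : AntitoneOn (fun i => ‖w i‖) (Set.Iio n)) (hkn : k + 1 < n)
    (h : ((Multiset.range n).map w).esymm (k + 1) = 0) :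
    ‖w k‖ ≤ ((n.choose (k + 1) : ℝ) - 1) * ‖w (k + 1)‖ := by
  have hchoose : (1 : ℝ) ≤ n.choose (k + 1) := Nat.one_le_cast.mpr (Nat.choose_pos hkn.le)
  rcases eq_or_ne (w k) 0 with hk0 | hk0
  · rw [hk0, norm_zero]
    exact mul_nonneg (sub_nonneg.mpr hchoose) (norm_nonneg _)
  set PS := (range n).powersetCard (k + 1)
  have hT0 : range (k + 1) ∈ PS :=
    mem_powersetCard.mpr ⟨range_subset_range.mpr hkn.le, card_range _⟩
  have hsum : ∑ T ∈ PS, ∏ i ∈ T, w i = 0 := (esymm_map_val w (range n) (k + 1)).symm.trans h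
  have hlead :
      ‖∏ i ∈ range (k + 1), w i‖ ≤ ∑ T ∈ PS.erase (range (k + 1)), ‖∏ i ∈ T, w i‖ := by
    rw [← add_sum_erase PS _ hT0, add_eq_zero_iff_eq_neg] at hsum
    rw [hsum, norm_neg]
    exact norm_sum_le _ _
  have hothers : ∑ T ∈ PS.erase (range (k + 1)), ‖∏ i ∈ T, w i‖ ≤
      ((n.choose (k + 1) : ℝ) - 1) * ((∏ i ∈ range k, ‖w i‖) * ‖w (k + 1)‖) := by
    calc _ ≤ #(PS.erase (range (k + 1))) • ((∏ i ∈ range k, ‖w i‖) * ‖w (k + 1)‖) := by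
          refine sum_le_card_nsmul _ _ _ fun T hT => ?_
          obtain ⟨hne, hT⟩ := mem_erase.mp hT
          obtain ⟨hsub, hcard⟩ := mem_powersetCard.mp hT
          rw [norm_prod]
          exact prod_le_prod_range_mul_of_ne_range (fun _ => norm_nonneg _) hw hsub hcard hne
      _ = _ := by rw [nsmul_eq_mul, cast_card_erase_of_mem hT0, card_powersetCard, card_range]
  have hprod_pos : 0 < ∏ i ∈ range k, ‖w i‖ := prod_pos fun i hi =>
    (norm_pos_iff.mpr hk0).trans_le <|
      hw (by simp at hi ⊢; omega) (by simp; omega) (by simp at hi; omega)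
  rw [norm_prod, prod_range_succ] at hlead
  exact le_of_mul_le_mul_left (by linarith [hlead.trans hothers]) hprod_pos

theorem stmt0_general (n : ℕ) (P : Polynomial ℂ) (z : ℕ → ℂ)
    (hroots : P.roots = (Multiset.range n).map (fun i => z (i + 1)))
    (hord : ∀ a b, 1 ≤ a → a ≤ b → b ≤ n → ‖z b‖ ≤ ‖z a‖)
    (j : ℕ) (hj1 : 1 ≤ j) (hj2 : j ≤ n - 1)
    (hSj : S P.roots j = 0) :
    ‖z j‖ ≤ (n.choose j : ℝ) * ‖z (j + 1)‖ := by
  obtain ⟨k, rfl⟩ : ∃ k, j = k + 1 := ⟨j - 1, by omega⟩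
  have hw : AntitoneOn (fun i => ‖z (i + 1)‖) (Set.Iio n) := fun a _ b hb hab =>
    hord (a + 1) (b + 1) (by omega) (by omega) (by simp at hb; omega)
  have hesymm : ((Multiset.range n).map (fun i => z (i + 1))).esymm (k + 1) = 0 := by
    have : (-1 : ℂ) ^ (k + 1) * _ = 0 := (Multiset.esymm_neg _ _).symm.trans (hroots ▸ hSj)
    simpa using this
  calc ‖z (k + 1)‖ ≤ ((n.choose (k + 1) : ℝ) - 1) * ‖z (k + 1 + 1)‖ :=
        norm_le_mul_norm_of_esymm_eq_zero hw (by omega) hesymm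
    _ ≤ (n.choose (k + 1) : ℝ) * ‖z (k + 1 + 1)‖ :=
        mul_le_mul_of_nonneg_right (by linarith) (norm_nonneg _)

/-- If the `j`-th elementary symmetric function of the roots of a degree-`n` complex
polynomial vanishes (roots ordered by decreasing modulus), then
`|z_j| ≤ (n choose j) · |z_{j+1}|`. -/
theorem stmt0 (n : ℕ) (P : Polynomial ℂ) (z : ℕ → ℂ)
    (hP : P ≠ 0) (hdeg : P.natDegree = n)
    (hroots : P.roots = (Multiset.range n).map (fun i => z (i + 1)))
    (hord : ∀ a b, 1 ≤ a → a ≤ b → b ≤ n → ‖z b‖ ≤ ‖z a‖)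
    (j : ℕ) (hj1 : 1 ≤ j) (hj2 : j ≤ n - 1)
    (hSj : S P.roots j = 0) :
    ‖z j‖ ≤ (n.choose j : ℝ) * ‖z (j + 1)‖ :=
  stmt0_general n P z hroots hord j hj1 hj2 hSj
end

section
/- Let z_1, ..., z_n be the roots of a degree n complex polynomial ordered by decreasing modulus, and suppose S_j = 0 for some 1 ≤ j ≤ n-1 (the j-th elementary symmetric function of the roots). If z_j ≠ 0, then 1 ≤ (n choose j) · |z_{j+1}|/|z_j|. Equivalently, |z_1 z_2 ⋯ z_j| ≤ (n choose j) · |z_1 ⋯ z_{j-1} z_{j+1}|. -/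
open Finset

section AntitoneProducts

variable {w : ℕ → ℝ} {n : ℕ}

theorem prod_le_prod_range_card (h0 : ∀ i, 0 ≤ w i) (hw : AntitoneOn w (Set.Iio n))
    {s : Finset ℕ} (hs : s ⊆ range n) : ∏ i ∈ s, w i ≤ ∏ i ∈ range #s, w i := by
  induction s using Finset.induction_on_max with
  | empty => simp
  | insert a s ha ih =>
    have has : a ∉ s := fun h => lt_irrefl a (ha a h)
    have hcard : #s ≤ a := by simpa using card_le_card fun b hb => mem_range.mpr (ha b hb)
    have han : a < n := mem_range.mp (hs (mem_insert_self a s))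
    rw [prod_insert has, card_insert_of_notMem has, prod_range_succ, mul_comm]
    exact mul_le_mul (ih ((subset_insert a s).trans hs)) (hw (hcard.trans_lt han) han hcard)
      (h0 a) (prod_nonneg fun i _ => h0 i)

theorem prod_le_prod_range_pred_mul (h0 : ∀ i, 0 ≤ w i) (hw : AntitoneOn w (Set.Iio n))
    {t : Finset ℕ} {j : ℕ} (ht : t ⊆ range n) (hcard : #t = j) (hne : t ≠ range j) :
    ∏ i ∈ t, w i ≤ (∏ i ∈ range (j - 1), w i) * w j := by
  obtain ⟨m, hm, hjm⟩ : ∃ m ∈ t, j ≤ m := by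
    by_contra! h
    exact hne (eq_of_subset_of_card_le (fun x hx => mem_range.mpr (h x hx))
      (by rw [hcard, card_range]))
  have hmn : m < n := mem_range.mp (ht hm)
  rw [← prod_erase_mul t w hm]
  refine mul_le_mul ?_ (hw (hjm.trans_lt hmn) hmn hjm) (h0 m) (prod_nonneg fun i _ => h0 i)
  simpa [card_erase_of_mem hm, hcard] using
    prod_le_prod_range_card h0 hw ((erase_subset m t).trans ht)

end AntitoneProducts

theorem prod_range_norm_le_choose_mul_of_esymm_eq_zero {𝕜 : Type*} [NormedField 𝕜]
    {x : ℕ → 𝕜} {n j : ℕ} (hx : AntitoneOn (fun i => ‖x i‖) (Set.Iio n)) (hj : j ≤ n)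
    (hesymm : ((Multiset.range n).map x).esymm j = 0) :
    ∏ i ∈ range j, ‖x i‖ ≤ n.choose j * ((∏ i ∈ range (j - 1), ‖x i‖) * ‖x j‖) := by
  set F := (range n).powersetCard j
  set B := (∏ i ∈ range (j - 1), ‖x i‖) * ‖x j‖
  have hT : range j ∈ F := mem_powersetCard.mpr ⟨range_subset_range.mpr hj, card_range j⟩
  have hsplit : ∏ i ∈ range j, x i = -∑ t ∈ F.erase (range j), ∏ i ∈ t, x i := by
    rw [eq_neg_iff_add_eq_zero, add_sum_erase F (fun t => ∏ i ∈ t, x i) hT]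
    simpa [← range_val, esymm_map_val] using hesymm
  have hbound : ∀ t ∈ F.erase (range j), ‖∏ i ∈ t, x i‖ ≤ B := by
    intro t ht
    obtain ⟨hne, htF⟩ := mem_erase.mp ht
    obtain ⟨hsub, hcard⟩ := mem_powersetCard.mp htF
    rw [norm_prod]
    exact prod_le_prod_range_pred_mul (fun i => norm_nonneg _) hx hsub hcard hne
  have hcardF : (#(F.erase (range j)) : ℝ) ≤ n.choose j := by
    exact_mod_cast card_erase_le.trans_eq (by rw [card_powersetCard, card_range])
  calc ∏ i ∈ range j, ‖x i‖ = ‖∏ i ∈ range j, x i‖ := (norm_prod _ _).symm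
    _ ≤ ∑ t ∈ F.erase (range j), ‖∏ i ∈ t, x i‖ := by
      rw [hsplit, norm_neg]
      exact norm_sum_le _ _
    _ ≤ #(F.erase (range j)) • B := sum_le_card_nsmul _ _ _ hbound
    _ ≤ n.choose j * B := by
      rw [nsmul_eq_mul]
      exact mul_le_mul_of_nonneg_right hcardF (by positivity)

theorem prod_Icc_one_eq_prod_range {M : Type*} [CommMonoid M] (f : ℕ → M) (k : ℕ) :
    ∏ i ∈ Icc 1 k, f i = ∏ i ∈ range k, f (i + 1) := by
  rw [← Ico_add_one_right_eq_Icc, prod_Ico_eq_prod_range, Nat.add_sub_cancel]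
  simp only [add_comm]

theorem stmt1_general (n : ℕ) (P : Polynomial ℂ) (z : ℕ → ℂ)
    (hroots : P.roots = (Multiset.range n).map (fun i => z (i + 1)))
    (hord : ∀ a b, 1 ≤ a → a ≤ b → b ≤ n → ‖z b‖ ≤ ‖z a‖)
    (j : ℕ) (hj1 : 1 ≤ j) (hj2 : j ≤ n - 1)
    (hSj : S P.roots j = 0) (hz : z j ≠ 0) :
    (1 : ℝ) ≤ (n.choose j : ℝ) * (‖z (j + 1)‖ / ‖z j‖) ∧
    ‖∏ i ∈ Finset.Icc 1 j, z i‖ ≤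
      (n.choose j : ℝ) * ‖(∏ i ∈ Finset.Icc 1 (j - 1), z i) * z (j + 1)‖ := by
  have hesymm : ((Multiset.range n).map fun i => -z (i + 1)).esymm j = 0 := by
    rw [← hSj, S, hroots, Multiset.map_map]
    rfl
  have hanti : AntitoneOn (fun i => ‖-z (i + 1)‖) (Set.Iio n) := fun a _ b hb hab => by
    simp only [norm_neg]
    exact hord _ _ (by omega) (by omega) (Set.mem_Iio.mp hb)
  have hmain := prod_range_norm_le_choose_mul_of_esymm_eq_zero hanti (by omega) hesymm
  simp only [norm_neg] at hmain
  refine ⟨?_, by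
    rwa [norm_mul, prod_Icc_one_eq_prod_range, prod_Icc_one_eq_prod_range, norm_prod, norm_prod]⟩
  have hzj : 0 < ‖z j‖ := norm_pos_iff.mpr hz
  have hD : 0 < ∏ i ∈ range (j - 1), ‖z (i + 1)‖ := prod_pos fun i hi =>
    hzj.trans_le (hord _ _ (by omega) (by have := mem_range.mp hi; omega) (by omega))
  obtain ⟨k, rfl⟩ : ∃ k, j = k + 1 := ⟨j - 1, by omega⟩
  rw [prod_range_succ, Nat.add_sub_cancel, mul_left_comm] at hmain
  rw [Nat.add_sub_cancel] at hD
  rw [mul_div_assoc', le_div_iff₀ hzj, one_mul]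
  exact le_of_mul_le_mul_left hmain hD

/-- If `S_j = 0` for roots ordered by decreasing modulus and `z_j ≠ 0`, then
`1 ≤ (n choose j)·|z_{j+1}|/|z_j|`; equivalently
`|z_1⋯z_j| ≤ (n choose j)·|z_1⋯z_{j-1} z_{j+1}|`. -/
theorem stmt1 (n : ℕ) (P : Polynomial ℂ) (z : ℕ → ℂ)
    (hP : P ≠ 0) (hdeg : P.natDegree = n)
    (hroots : P.roots = (Multiset.range n).map (fun i => z (i + 1)))
    (hord : ∀ a b, 1 ≤ a → a ≤ b → b ≤ n → ‖z b‖ ≤ ‖z a‖)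
    (j : ℕ) (hj1 : 1 ≤ j) (hj2 : j ≤ n - 1)
    (hSj : S P.roots j = 0) (hz : z j ≠ 0) :
    (1 : ℝ) ≤ (n.choose j : ℝ) * (‖z (j + 1)‖ / ‖z j‖) ∧
    ‖∏ i ∈ Finset.Icc 1 j, z i‖ ≤
      (n.choose j : ℝ) * ‖(∏ i ∈ Finset.Icc 1 (j - 1), z i) * z (j + 1)‖ :=
  stmt1_general n P z hroots hord j hj1 hj2 hSj hz
end

section
/- For integers m ≥ 1, j ≥ 1 and 1 ≤ l ≤ m the binomial identity holds: C(m, l-1)·C(m-1+j, m-1) - C(m-1+j, l-2)·C(m+j-l, j-1) = C(m+j, l-1)·C(m+j-l, j). -/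
/-- Binomial coefficient on integers with the convention `C(n,k) = 0` for `k < 0`
or `k > n`. -/
def Cb (n k : ℤ) : ℤ := if 0 ≤ k ∧ k ≤ n then (n.toNat).choose k.toNat else 0

open Nat in
private lemma key_stmt4 (b c d : ℕ) :
    (b+c+2).choose (b+1) * (b+c+d+2).choose (b+c+1)
      = (b+c+d+3).choose (b+1) * (c+d+1).choose (d+1)
        + (b+c+d+2).choose b * (c+d+1).choose d := by
  have h1 : ((b+c+2).choose (b+1) : ℚ) = (b+c+2)! / ((b+1)! * (c+1)!) := by
    rw [Nat.cast_choose ℚ (by omega), show b+c+2 - (b+1) = c+1 from by omega]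
  have h2 : ((b+c+d+2).choose (b+c+1) : ℚ) = (b+c+d+2)! / ((b+c+1)! * (d+1)!) := by
    rw [Nat.cast_choose ℚ (by omega), show b+c+d+2 - (b+c+1) = d+1 from by omega]
  have h3 : ((b+c+d+3).choose (b+1) : ℚ) = (b+c+d+3)! / ((b+1)! * (c+d+2)!) := by
    rw [Nat.cast_choose ℚ (by omega), show b+c+d+3 - (b+1) = c+d+2 from by omega]
  have h4 : ((c+d+1).choose (d+1) : ℚ) = (c+d+1)! / ((d+1)! * c !) := by
    rw [Nat.cast_choose ℚ (by omega), show c+d+1 - (d+1) = c from by omega]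
  have h5 : ((b+c+d+2).choose b : ℚ) = (b+c+d+2)! / (b ! * (c+d+2)!) := by
    rw [Nat.cast_choose ℚ (by omega), show b+c+d+2 - b = c+d+2 from by omega]
  have h6 : ((c+d+1).choose d : ℚ) = (c+d+1)! / (d ! * (c+1)!) := by
    rw [Nat.cast_choose ℚ (by omega), show c+d+1 - d = c+1 from by omega]
  have f1 : ((b+c+2)! : ℚ) = (b+c+2) * (b+c+1)! := by
    rw [show b+c+2 = (b+c+1)+1 by omega, Nat.factorial_succ]; push_cast; ring
  have f2 : ((b+1)! : ℚ) = (b+1) * b ! := by rw [Nat.factorial_succ]; push_cast; ring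
  have f3 : ((c+1)! : ℚ) = (c+1) * c ! := by rw [Nat.factorial_succ]; push_cast; ring
  have f4 : ((d+1)! : ℚ) = (d+1) * d ! := by rw [Nat.factorial_succ]; push_cast; ring
  have f5 : ((b+c+d+3)! : ℚ) = (b+c+d+3) * (b+c+d+2)! := by
    rw [show b+c+d+3 = (b+c+d+2)+1 by omega, Nat.factorial_succ]; push_cast; ring
  have f6 : ((c+d+2)! : ℚ) = (c+d+2) * (c+d+1)! := by
    rw [show c+d+2 = (c+d+1)+1 by omega, Nat.factorial_succ]; push_cast; ring
  have n1 : ((b+c+1)! : ℚ) ≠ 0 := Nat.cast_ne_zero.2 (Nat.factorial_ne_zero _)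
  have n2 : ((b : ℕ)! : ℚ) ≠ 0 := Nat.cast_ne_zero.2 (Nat.factorial_ne_zero _)
  have n3 : ((c : ℕ)! : ℚ) ≠ 0 := Nat.cast_ne_zero.2 (Nat.factorial_ne_zero _)
  have n4 : ((d : ℕ)! : ℚ) ≠ 0 := Nat.cast_ne_zero.2 (Nat.factorial_ne_zero _)
  have n5 : ((b+c+d+2)! : ℚ) ≠ 0 := Nat.cast_ne_zero.2 (Nat.factorial_ne_zero _)
  have n6 : ((c+d+1)! : ℚ) ≠ 0 := Nat.cast_ne_zero.2 (Nat.factorial_ne_zero _)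
  have nb : ((b:ℚ)+1) ≠ 0 := by positivity
  have nc : ((c:ℚ)+1) ≠ 0 := by positivity
  have nd : ((d:ℚ)+1) ≠ 0 := by positivity
  have ncd : ((c:ℚ)+d+2) ≠ 0 := by positivity
  qify
  rw [h1, h2, h3, h4, h5, h6, f1, f2, f3, f4, f5, f6]
  field_simp
  ring

private lemma Cb_coe (n k : ℕ) (h : k ≤ n) : Cb n k = n.choose k := by
  unfold Cb
  rw [if_pos ⟨Int.ofNat_nonneg k, by exact_mod_cast h⟩]
  simp

/-- The binomial identity behind the inductive step of the recurrence solution: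
`C(m,l-1)C(m-1+j,m-1) - C(m-1+j,l-2)C(m+j-l,j-1) = C(m+j,l-1)C(m+j-l,j)`
for `m ≥ 1`, `j ≥ 1`, `1 ≤ l ≤ m`. -/
theorem stmt4 (m j l : ℤ) (hm : 1 ≤ m) (hj : 1 ≤ j) (hl1 : 1 ≤ l) (hlm : l ≤ m) :
    Cb m (l - 1) * Cb (m - 1 + j) (m - 1) - Cb (m - 1 + j) (l - 2) * Cb (m + j - l) (j - 1)
      = Cb (m + j) (l - 1) * Cb (m + j - l) j := by
  obtain ⟨d, hd⟩ : ∃ d : ℕ, j = (d : ℤ) + 1 := ⟨(j-1).toNat, by omega⟩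
  rcases eq_or_lt_of_le hl1 with h1 | h2
  · -- l = 1
    obtain ⟨a, ha⟩ : ∃ a : ℕ, m = (a : ℤ) + 1 := ⟨(m-1).toNat, by omega⟩
    subst hd ha
    have hz : Cb ((a:ℤ) + 1 - 1 + (d + 1)) ((1:ℤ) - 2) = 0 := by
      unfold Cb; rw [if_neg]; omega
    rw [← h1, hz]
    have e1 : Cb ((a:ℤ) + 1) ((1:ℤ) - 1) = ((a + 1).choose 0 : ℤ) := by
      rw [show ((a:ℤ) + 1) = ((a + 1 : ℕ) : ℤ) by push_cast; ring,
          show ((1:ℤ) - 1) = ((0 : ℕ) : ℤ) by norm_num]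
      exact Cb_coe _ _ (by omega)
    have e2 : Cb ((a:ℤ) + 1 - 1 + ((d:ℤ) + 1)) ((a:ℤ) + 1 - 1)
        = ((a + d + 1).choose a : ℤ) := by
      rw [show ((a:ℤ) + 1 - 1 + ((d:ℤ) + 1)) = ((a + d + 1 : ℕ) : ℤ) by push_cast; ring,
          show ((a:ℤ) + 1 - 1) = ((a : ℕ) : ℤ) by push_cast; ring]
      exact Cb_coe _ _ (by omega)
    have e3 : Cb ((a:ℤ) + 1 + ((d:ℤ) + 1)) ((1:ℤ) - 1)
        = ((a + d + 2).choose 0 : ℤ) := by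
      rw [show ((a:ℤ) + 1 + ((d:ℤ) + 1)) = ((a + d + 2 : ℕ) : ℤ) by push_cast; ring,
          show ((1:ℤ) - 1) = ((0 : ℕ) : ℤ) by norm_num]
      exact Cb_coe _ _ (by omega)
    have e4 : Cb ((a:ℤ) + 1 + ((d:ℤ) + 1) - ((1:ℤ))) ((d:ℤ) + 1)
        = ((a + d + 1).choose (d + 1) : ℤ) := by
      rw [show ((a:ℤ) + 1 + ((d:ℤ) + 1) - ((1:ℤ))) = ((a + d + 1 : ℕ) : ℤ) by push_cast; ring,
          show ((d:ℤ) + 1) = ((d + 1 : ℕ) : ℤ) by push_cast; ring]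
      exact Cb_coe _ _ (by omega)
    rw [e1, e2, e3, e4]
    have : (a + d + 1).choose a = (a + d + 1).choose (d + 1) := by
      rw [← Nat.choose_symm (by omega : a ≤ a + d + 1),
          show a + d + 1 - a = d + 1 from by omega]
    simp [this]
  · -- l ≥ 2
    obtain ⟨b, hb⟩ : ∃ b : ℕ, l = (b : ℤ) + 2 := ⟨(l-2).toNat, by omega⟩
    obtain ⟨c, hc⟩ : ∃ c : ℕ, m = (b : ℤ) + c + 2 := ⟨(m-l).toNat, by omega⟩
    subst hd hb hc
    have e1 : Cb ((b:ℤ) + c + 2) ((b:ℤ) + 2 - 1) = ((b + c + 2).choose (b + 1) : ℤ) := by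
      rw [show ((b:ℤ) + c + 2) = ((b + c + 2 : ℕ) : ℤ) by push_cast; ring,
          show ((b:ℤ) + 2 - 1) = ((b + 1 : ℕ) : ℤ) by push_cast; ring]
      exact Cb_coe _ _ (by omega)
    have e2 : Cb ((b:ℤ) + c + 2 - 1 + ((d:ℤ) + 1)) ((b:ℤ) + c + 2 - 1)
        = ((b + c + d + 2).choose (b + c + 1) : ℤ) := by
      rw [show ((b:ℤ) + c + 2 - 1 + ((d:ℤ) + 1)) = ((b + c + d + 2 : ℕ) : ℤ) by
            push_cast; ring,
          show ((b:ℤ) + c + 2 - 1) = ((b + c + 1 : ℕ) : ℤ) by push_cast; ring]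
      exact Cb_coe _ _ (by omega)
    have e3 : Cb ((b:ℤ) + c + 2 - 1 + ((d:ℤ) + 1)) ((b:ℤ) + 2 - 2)
        = ((b + c + d + 2).choose b : ℤ) := by
      rw [show ((b:ℤ) + c + 2 - 1 + ((d:ℤ) + 1)) = ((b + c + d + 2 : ℕ) : ℤ) by
            push_cast; ring,
          show ((b:ℤ) + 2 - 2) = ((b : ℕ) : ℤ) by push_cast; ring]
      exact Cb_coe _ _ (by omega)
    have e4 : Cb ((b:ℤ) + c + 2 + ((d:ℤ) + 1) - ((b:ℤ) + 2)) ((d:ℤ) + 1 - 1)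
        = ((c + d + 1).choose d : ℤ) := by
      rw [show ((b:ℤ) + c + 2 + ((d:ℤ) + 1) - ((b:ℤ) + 2)) = ((c + d + 1 : ℕ) : ℤ) by
            push_cast; ring,
          show ((d:ℤ) + 1 - 1) = ((d : ℕ) : ℤ) by push_cast; ring]
      exact Cb_coe _ _ (by omega)
    have e5 : Cb ((b:ℤ) + c + 2 + ((d:ℤ) + 1)) ((b:ℤ) + 2 - 1)
        = ((b + c + d + 3).choose (b + 1) : ℤ) := by
      rw [show ((b:ℤ) + c + 2 + ((d:ℤ) + 1)) = ((b + c + d + 3 : ℕ) : ℤ) by push_cast; ring,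
          show ((b:ℤ) + 2 - 1) = ((b + 1 : ℕ) : ℤ) by push_cast; ring]
      exact Cb_coe _ _ (by omega)
    have e6 : Cb ((b:ℤ) + c + 2 + ((d:ℤ) + 1) - ((b:ℤ) + 2)) ((d:ℤ) + 1)
        = ((c + d + 1).choose (d + 1) : ℤ) := by
      rw [show ((b:ℤ) + c + 2 + ((d:ℤ) + 1) - ((b:ℤ) + 2)) = ((c + d + 1 : ℕ) : ℤ) by
            push_cast; ring,
          show ((d:ℤ) + 1) = ((d + 1 : ℕ) : ℤ) by push_cast; ring]
      exact Cb_coe _ _ (by omega)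
    rw [e1, e2, e3, e4, e5, e6]
    have k' : ((b+c+2).choose (b+1) : ℤ) * ((b+c+d+2).choose (b+c+1) : ℤ)
        = ((b+c+d+3).choose (b+1) : ℤ) * ((c+d+1).choose (d+1) : ℤ)
          + ((b+c+d+2).choose b : ℤ) * ((c+d+1).choose d : ℤ) := by
      exact_mod_cast key_stmt4 b c d
    linarith
end

section
/- Let Ψ(t) = x + y_1 t^{k_1} + ... + y_L t^{k_L} with x, y_L ≠ 0 and 0 < k_1 < ... < k_L, and let z_1, ..., z_{k_L} be its roots ordered by decreasing modulus. Then there is a constant C depending only on k_1,...,k_L such that within each 'block' between consecutive critical indices the root moduli are comparable: for every 0 ≤ i ≤ L-1 and every pair of indices a, b with D_i < a, b ≤ D_{i+1} (where D_i = k_L - k_{L-i}, k_0 = 0), one has |z_a| ≤ C |z_b|. -/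
/-!
By Vieta, the coefficient of `X ^ (k L - j)` in `Ψ` is `± y L` times the `j`-th elementary
symmetric function of the roots, so it vanishes for every `j` strictly inside a block. With the
roots ordered by decreasing modulus, every term of that sum other than `z₁ ⋯ z_j` has modulus at
most `|z₁ ⋯ z_{j-1}| |z_{j+1}|`, and `z₁ ⋯ z_j` is minus their sum; hence
`|z_j| ≤ 2 ^ (k L) |z_{j+1}|`. Chaining these steps across a block gives the comparability.
-/

open Finset Polynomial

section ProdAntitone

variable {R : Type*} [CommSemiring R] [PartialOrder R] [IsOrderedRing R] {w : ℕ → R}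

theorem prod_le_prod_range_card_of_antitone (hw0 : ∀ i, 0 ≤ w i) (hw : Antitone w)
    (A : Finset ℕ) : ∏ i ∈ A, w i ≤ ∏ i ∈ range #A, w i := by
  induction A using Finset.induction_on_max with
  | empty => simp
  | insert a s hlt ih =>
    have has : a ∉ s := fun h => (hlt a h).false
    have hcard : #s ≤ a := by
      simpa using card_le_card (fun x hx => mem_range.mpr (hlt x hx) : s ⊆ range a)
    rw [prod_insert has, card_insert_of_notMem has, prod_range_succ, mul_comm]
    exact mul_le_mul ih (hw hcard) (hw0 a) (prod_nonneg fun i _ => hw0 i)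

theorem prod_le_prod_range_mul_of_ne_range (hw0 : ∀ i, 0 ≤ w i) (hw : Antitone w)
    {A : Finset ℕ} {j : ℕ} (hA : #A = j + 1) (hne : A ≠ range (j + 1)) :
    ∏ i ∈ A, w i ≤ (∏ i ∈ range j, w i) * w (j + 1) := by
  obtain ⟨m, hmA, hm⟩ : ∃ m ∈ A, m ∉ range (j + 1) := by
    by_contra! h
    exact hne (eq_of_subset_of_card_le h (by simp [hA]))
  rw [← mul_prod_erase A w hmA, mul_comm]
  refine mul_le_mul ?_ (hw (by simpa using hm)) (hw0 m) (prod_nonneg fun i _ => hw0 i)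
  simpa [card_erase_of_mem hmA, hA] using prod_le_prod_range_card_of_antitone hw0 hw (A.erase m)

end ProdAntitone

theorem norm_le_two_pow_mul_norm_succ_of_esymm_eq_zero {K : Type*} [NormedField K]
    {u : ℕ → K} (hu : Antitone (‖u ·‖)) {n j : ℕ} (hj : j < n)
    (hesymm : ((range n).val.map u).esymm (j + 1) = 0) :
    ‖u j‖ ≤ 2 ^ n * ‖u (j + 1)‖ := by
  rw [esymm_map_val] at hesymm
  set s := (range n).powersetCard (j + 1)
  set Q := ∏ i ∈ range j, ‖u i‖
  have hQ : 0 ≤ Q := prod_nonneg fun i _ => norm_nonneg _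
  have hmem : range (j + 1) ∈ s := mem_powersetCard.mpr ⟨range_subset_range.mpr hj, card_range _⟩
  have hother : ∀ A ∈ s.erase (range (j + 1)), ‖∏ i ∈ A, u i‖ ≤ Q * ‖u (j + 1)‖ := by
    intro A hA
    rw [norm_prod]
    exact prod_le_prod_range_mul_of_ne_range (fun _ => norm_nonneg _) hu
      (mem_powersetCard.mp (mem_of_mem_erase hA)).2 (ne_of_mem_erase hA)
  have hcard : (#(s.erase (range (j + 1))) : ℝ) ≤ 2 ^ n := by
    exact_mod_cast card_erase_le.trans (by simpa [s] using Nat.choose_le_two_pow n (j + 1))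
  -- the vanishing sum makes `u 0 ⋯ u j` no larger than the other terms, each `≤ Q * ‖u (j + 1)‖`
  have hkey : Q * ‖u j‖ ≤ Q * (2 ^ n * ‖u (j + 1)‖) := calc
    Q * ‖u j‖ = ‖∏ i ∈ range (j + 1), u i‖ := by rw [norm_prod, prod_range_succ]
    _ = ‖∑ A ∈ s.erase (range (j + 1)), ∏ i ∈ A, u i‖ := by
      rw [eq_neg_of_add_eq_zero_left ((add_sum_erase s _ hmem).trans hesymm), norm_neg]
    _ ≤ ∑ A ∈ s.erase (range (j + 1)), Q * ‖u (j + 1)‖ := norm_sum_le_of_le _ hother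
    _ ≤ Q * (2 ^ n * ‖u (j + 1)‖) := by
      rw [sum_const, nsmul_eq_mul, mul_left_comm]
      exact mul_le_mul_of_nonneg_left (mul_le_mul_of_nonneg_right hcard (norm_nonneg _)) hQ
  rcases hQ.eq_or_lt with hQ0 | hQpos
  · obtain ⟨i, hi, hui⟩ := prod_eq_zero_iff.mp hQ0.symm
    have : ‖u j‖ = 0 := le_antisymm (hui ▸ hu (mem_range.mp hi).le) (norm_nonneg _)
    rw [this]
    positivity
  · exact le_of_mul_le_mul_left hkey hQpos

theorem norm_le_two_pow_mul_norm_succ_of_esymm_map_range_eq_zero {K : Type*} [NormedField K]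
    {z : ℕ → K} {n j : ℕ} (hord : ∀ a b, 1 ≤ a → a ≤ b → b ≤ n → ‖z b‖ ≤ ‖z a‖)
    (hj : 1 ≤ j) (hjn : j < n) (hesymm : ((Multiset.range n).map fun i => z (i + 1)).esymm j = 0) :
    ‖z j‖ ≤ 2 ^ n * ‖z (j + 1)‖ := by
  -- `u` extends `i ↦ z (i + 1)` past the index range so that its modulus is antitone on all of `ℕ`
  set u : ℕ → K := fun i => z (min (i + 1) n)
  have hu : Antitone (‖u ·‖) := fun _ _ _ => hord _ _ (by omega) (by omega) (by omega)
  have hmap : (Multiset.range n).map (fun i => z (i + 1)) = (range n).val.map u :=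
    Multiset.map_congr rfl fun i hi => by
      simp only [u, min_eq_left (Nat.succ_le_of_lt (Multiset.mem_range.mp hi))]
  rw [hmap, show j = j - 1 + 1 by omega] at hesymm
  simpa [u, show j - 1 + 1 = j by omega, min_eq_left hjn.le, min_eq_left (Nat.succ_le_of_lt hjn)]
    using norm_le_two_pow_mul_norm_succ_of_esymm_eq_zero hu (by omega) hesymm

theorem le_pow_mul_of_le_mul_succ {f : ℕ → ℝ} {c : ℝ} (hc : 0 ≤ c) {a b : ℕ} (hab : a ≤ b)
    (h : ∀ j, a ≤ j → j < b → f j ≤ c * f (j + 1)) : f a ≤ c ^ (b - a) * f b := by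
  induction b, hab using Nat.le_induction with
  | base => simp
  | succ b hab ih =>
    calc f a ≤ c ^ (b - a) * f b := ih fun j h1 h2 => h j h1 (by omega)
      _ ≤ c ^ (b - a) * (c * f (b + 1)) := by
        gcongr
        exact h b hab (by omega)
      _ = c ^ (b + 1 - a) * f (b + 1) := by
        rw [show b + 1 - a = b - a + 1 by omega, pow_succ, mul_assoc]

theorem esymm_roots_eq_zero_of_coeff_eq_zero {R : Type*} [CommRing R] [IsDomain R] {p : R[X]}
    (hroots : Multiset.card p.roots = p.natDegree) {m : ℕ} (hm : m < p.natDegree)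
    (hc : p.coeff m = 0) : p.roots.esymm (p.natDegree - m) = 0 := by
  have hp : p ≠ 0 := ne_zero_of_natDegree_gt hm
  have := coeff_eq_esymm_roots_of_card hroots hm.le
  simpa [hc, hp] using this.symm

section SparsePoly

variable {R : Type*} [CommRing R]

noncomputable def sparsePoly (y : ℕ → R) (k : ℕ → ℕ) (L : ℕ) : R[X] :=
  ∑ i ∈ range (L + 1), C (y i) * X ^ k i

variable {y : ℕ → R} {k : ℕ → ℕ} {L : ℕ}

theorem natDegree_sparsePoly_le (hk : ∀ i ≤ L, k i ≤ k L) : (sparsePoly y k L).natDegree ≤ k L :=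
  natDegree_sum_le_of_forall_le _ _ fun i hi =>
    (natDegree_C_mul_X_pow_le _ _).trans (hk i (Nat.lt_succ_iff.mp (mem_range.mp hi)))

theorem coeff_sparsePoly_eq_zero {m : ℕ} (hm : ∀ i ≤ L, k i ≠ m) :
    (sparsePoly y k L).coeff m = 0 := by
  rw [sparsePoly, finsetSum_coeff]
  refine sum_eq_zero fun i hi => ?_
  rw [coeff_C_mul_X_pow, if_neg (hm i (Nat.lt_succ_iff.mp (mem_range.mp hi))).symm]

theorem esymm_roots_sparsePoly_eq_zero [IsDomain R] (hk : StrictMonoOn k (Set.Iic L))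
    (hroots : Multiset.card (sparsePoly y k L).roots = k L) {i m : ℕ} (hi : i < L)
    (hm : k i < m) (hm' : m < k (i + 1)) : (sparsePoly y k L).roots.esymm (k L - m) = 0 := by
  have hkL : ∀ t ≤ L, k t ≤ k L := fun t ht => hk.monotoneOn ht (le_refl L) ht
  have hdeg : (sparsePoly y k L).natDegree = k L :=
    (natDegree_sparsePoly_le hkL).antisymm (hroots ▸ card_roots' _)
  rw [← hdeg] at hroots ⊢
  refine esymm_roots_eq_zero_of_coeff_eq_zero hroots (hdeg ▸ hm'.trans_le (hkL (i + 1) hi))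
    (coeff_sparsePoly_eq_zero fun t ht => ?_)
  rcases le_or_gt t i with hti | hit
  · exact ((hk.monotoneOn ht (show i ≤ L from hi.le) hti).trans_lt hm).ne
  · exact (hm'.trans_le (hk.monotoneOn (show i + 1 ≤ L from hi) ht hit)).ne'

end SparsePoly

theorem stmt10_general (L : ℕ) (k : ℕ → ℕ)
    (hkmono : ∀ i, i < L → k i < k (i + 1)) :
    ∃ C : ℝ, 0 < C ∧
      ∀ (y : ℕ → ℂ) (Ψ : Polynomial ℂ) (z : ℕ → ℂ),
        y 0 ≠ 0 → y L ≠ 0 →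
        Ψ = ∑ i ∈ Finset.range (L + 1), Polynomial.C (y i) * Polynomial.X ^ (k i) →
        Ψ.roots = (Multiset.range (k L)).map (fun i => z (i + 1)) →
        (∀ a b, 1 ≤ a → a ≤ b → b ≤ k L → ‖z b‖ ≤ ‖z a‖) →
        ∀ i, i < L → ∀ a b : ℕ,
          k L - k (L - i) < a → a ≤ k L - k (L - (i + 1)) →
          k L - k (L - i) < b → b ≤ k L - k (L - (i + 1)) →
          ‖z a‖ ≤ C * ‖z b‖ := by
  have hk : StrictMonoOn k (Set.Iic L) := strictMonoOn_Iic_of_lt_succ hkmono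
  set n := k L
  refine ⟨(2 ^ n) ^ n, by positivity, ?_⟩
  rintro y Ψ z - - rfl hroots hord i hi a b ha ha' hb hb'
  have hstep : ∀ j, n - k (L - i) < j → j < n - k (L - (i + 1)) →
      ‖z j‖ ≤ 2 ^ n * ‖z (j + 1)‖ := by
    intro j hj hj'
    have hL : L - i = L - (i + 1) + 1 := by omega
    refine norm_le_two_pow_mul_norm_succ_of_esymm_map_range_eq_zero hord (by omega) (by omega) ?_
    rw [← hroots, show j = n - (n - j) by omega]
    exact esymm_roots_sparsePoly_eq_zero hk (by simp [sparsePoly, hroots, n])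
      (by omega : L - (i + 1) < L) (by omega) (by rw [← hL]; omega)
  have h2n : (1 : ℝ) ≤ 2 ^ n := one_le_pow₀ one_le_two
  rcases le_total a b with hab | hba
  · calc ‖z a‖ ≤ (2 ^ n) ^ (b - a) * ‖z b‖ :=
          le_pow_mul_of_le_mul_succ (by positivity) hab fun j h h' => hstep j (by omega) (by omega)
      _ ≤ (2 ^ n) ^ n * ‖z b‖ := by gcongr; omega
  · calc ‖z a‖ ≤ ‖z b‖ := hord b a (by omega) hba (by omega)
      _ ≤ (2 ^ n) ^ n * ‖z b‖ := le_mul_of_one_le_left (norm_nonneg _) (one_le_pow₀ h2n)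

/-- Block comparability of root moduli: for a sparse polynomial with exponents
`0 = k₀ < k₁ < ... < k_L`, there is a constant `C` depending only on the exponents
such that for every `0 ≤ i ≤ L-1` and all indices `a, b` with
`D_i < a, b ≤ D_{i+1}` (where `D_i = k_L - k_{L-i}`), `|z_a| ≤ C |z_b|` for the
roots `z₁, z₂, ...` ordered by decreasing modulus. -/
theorem stmt10 (L : ℕ) (hL : 1 ≤ L) (k : ℕ → ℕ)
    (hk0 : k 0 = 0) (hkmono : ∀ i, i < L → k i < k (i + 1)) :
    ∃ C : ℝ, 0 < C ∧
      ∀ (y : ℕ → ℂ) (Ψ : Polynomial ℂ) (z : ℕ → ℂ),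
        y 0 ≠ 0 → y L ≠ 0 →
        Ψ = ∑ i ∈ Finset.range (L + 1), Polynomial.C (y i) * Polynomial.X ^ (k i) →
        Ψ.roots = (Multiset.range (k L)).map (fun i => z (i + 1)) →
        (∀ a b, 1 ≤ a → a ≤ b → b ≤ k L → ‖z b‖ ≤ ‖z a‖) →
        ∀ i, i < L → ∀ a b : ℕ,
          k L - k (L - i) < a → a ≤ k L - k (L - (i + 1)) →
          k L - k (L - i) < b → b ≤ k L - k (L - (i + 1)) →
          ‖z a‖ ≤ C * ‖z b‖ :=
  stmt10_general L k hkmono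
end

section
/- Let w_1, ..., w_b be complex numbers and let A_j = (w_1 + ... + w_j)/j denote the average of the first j of them. Suppose ε_1 ≤ ε_2 ≤ ... ≤ ε_b are positive reals and h > 0 such that |w_j - A_{j-1}| ≤ ε_j h for each 2 ≤ j ≤ b. Then for every 1 ≤ a ≤ b: |w_a - A_b| ≤ ((a-1)/a)·ε_a h + Σ_{j=a+1}^{b} (1/j)·ε_j h. In particular, |w_a - A_b| ≤ ((b-1)/b)·ε_b h provided ((a-1)/a)ε_a + Σ_{j=a+1}^{b} ε_j/j ≤ ((b-1)/b)ε_b. -/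
/-- Distance of a point to the running average: if `A_j` is the average of
`w₁,...,w_j`, the `ε_j` are positive and nondecreasing, and
`|w_j - A_{j-1}| ≤ ε_j h` for `2 ≤ j ≤ b`, then for each `1 ≤ a ≤ b`,
`|w_a - A_b| ≤ ((a-1)/a) ε_a h + Σ_{j=a+1}^{b} (1/j) ε_j h`; and, when moreover
`((a-1)/a)ε_a + Σ_{j=a+1}^{b} ε_j/j ≤ ((b-1)/b)ε_b`, also
`|w_a - A_b| ≤ ((b-1)/b) ε_b h`. -/
theorem stmt12 (b : ℕ) (hb : 1 ≤ b) (w : ℕ → ℂ) (ε : ℕ → ℝ) (h : ℝ)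
    (hεpos : ∀ j, 0 < ε j) (hεmono : ∀ i j, i ≤ j → ε i ≤ ε j) (hh : 0 < h)
    (A : ℕ → ℂ) (hA : ∀ j, A j = (∑ i ∈ Finset.Icc 1 j, w i) / (j : ℂ))
    (hclose : ∀ j, 2 ≤ j → j ≤ b → ‖w j - A (j - 1)‖ ≤ ε j * h) :
    ∀ a, 1 ≤ a → a ≤ b →
      (‖w a - A b‖ ≤
        (((a : ℝ) - 1) / a) * ε a * h + ∑ j ∈ Finset.Icc (a + 1) b, (1 / (j : ℝ)) * ε j * h) ∧
      ((((a : ℝ) - 1) / a) * ε a + ∑ j ∈ Finset.Icc (a + 1) b, ε j / (j : ℝ) ≤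
          (((b : ℝ) - 1) / b) * ε b →
        ‖w a - A b‖ ≤ (((b : ℝ) - 1) / b) * ε b * h) := by
  intro a ha hab
  -- recursive formula for the averages
  have hstep : ∀ j : ℕ, 2 ≤ j → A j = A (j - 1) + (w j - A (j - 1)) / (j : ℂ) := by
    intro j hj
    obtain ⟨k, rfl⟩ : ∃ k, j = k + 2 := ⟨j - 2, by omega⟩
    have h1 : k + 2 - 1 = k + 1 := by omega
    rw [h1, hA, hA, Finset.sum_Icc_succ_top (by omega : 1 ≤ k + 2)]
    have hk1 : ((k : ℂ) + 1) ≠ 0 := by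
      exact_mod_cast (Nat.cast_ne_zero (R := ℂ)).2 (by omega : (k + 1 : ℕ) ≠ 0)
    have hk2 : ((k : ℂ) + 2) ≠ 0 := by
      exact_mod_cast (Nat.cast_ne_zero (R := ℂ)).2 (by omega : (k + 2 : ℕ) ≠ 0)
    push_cast
    field_simp
    ring
  -- main estimate, by induction on c
  have key : ∀ c, a ≤ c → c ≤ b → ‖w a - A c‖ ≤
      (((a : ℝ) - 1) / a) * ε a * h +
        ∑ j ∈ Finset.Icc (a + 1) c, (1 / (j : ℝ)) * ε j * h := by
    intro c hac
    induction c, hac using Nat.le_induction with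
    | base =>
      intro _
      rw [Finset.Icc_eq_empty (by omega), Finset.sum_empty, add_zero]
      rcases eq_or_lt_of_le ha with h1 | h1
      · -- a = 1
        have : A 1 = w 1 := by rw [hA]; simp
        rw [← h1, this]
        simp
      · -- a ≥ 2
        have ha2 : 2 ≤ a := h1
        have heq : w a - A a = (((a : ℂ) - 1) / a) * (w a - A (a - 1)) := by
          rw [hstep a ha2]
          have hane : (a : ℂ) ≠ 0 := by
            exact_mod_cast (Nat.cast_ne_zero (R := ℂ)).2 (by omega : a ≠ 0)
          field_simp
          ring
        rw [heq, norm_mul, norm_div]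
        have h1 : ‖(a : ℂ) - 1‖ = (a : ℝ) - 1 := by
          have : ((a : ℂ) - 1) = (((a : ℝ) - 1 : ℝ) : ℂ) := by push_cast; ring
          rw [this, Complex.norm_real, Real.norm_eq_abs, abs_of_nonneg (by
            have : (1 : ℝ) ≤ (a : ℝ) := by exact_mod_cast ha
            linarith)]
        rw [h1, Complex.norm_natCast]
        have hfrac : 0 ≤ ((a : ℝ) - 1) / a := by
          apply div_nonneg
          · have : (1 : ℝ) ≤ (a : ℝ) := by exact_mod_cast ha
            linarith
          · positivity
        rw [mul_assoc]
        exact mul_le_mul_of_nonneg_left (hclose a ha2 hab) hfrac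
    | succ c hac ih =>
      intro hcb
      have ih' := ih (by omega)
      have hc2 : 2 ≤ c + 1 := by omega
      have heq : w a - A (c + 1) = (w a - A c) - (w (c + 1) - A c) / ((c : ℂ) + 1) := by
        have := hstep (c + 1) hc2
        simp only [Nat.add_sub_cancel] at this
        rw [this]
        push_cast
        ring
      rw [heq, Finset.sum_Icc_succ_top (by omega : a + 1 ≤ c + 1), ← add_assoc]
      refine le_trans (norm_sub_le _ _) (add_le_add ih' ?_)
      rw [norm_div]
      have hcast : ((c : ℂ) + 1) = ((c + 1 : ℕ) : ℂ) := by push_cast; ring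
      rw [hcast, Complex.norm_natCast]
      have hcl : ‖w (c + 1) - A (c + 1 - 1)‖ ≤ ε (c + 1) * h :=
        hclose (c + 1) hc2 hcb
      simp only [Nat.add_sub_cancel] at hcl
      have hpos : (0 : ℝ) < ((c + 1 : ℕ) : ℝ) := by positivity
      calc ‖w (c + 1) - A c‖ / ((c + 1 : ℕ) : ℝ)
          ≤ (ε (c + 1) * h) / ((c + 1 : ℕ) : ℝ) := by gcongr
        _ = 1 / ((c + 1 : ℕ) : ℝ) * ε (c + 1) * h := by ring
  have key' := key b hab le_rfl
  refine ⟨key', fun hsum => ?_⟩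
  have hrw : (((a : ℝ) - 1) / a) * ε a * h +
      ∑ j ∈ Finset.Icc (a + 1) b, (1 / (j : ℝ)) * ε j * h =
      ((((a : ℝ) - 1) / a) * ε a + ∑ j ∈ Finset.Icc (a + 1) b, ε j / (j : ℝ)) * h := by
    rw [add_mul, Finset.sum_mul]
    congr 1
    apply Finset.sum_congr rfl
    intro j _
    ring
  rw [hrw] at key'
  exact le_trans key' (mul_le_mul_of_nonneg_right hsum hh.le)
end

section
/- Let T be a finite multiset of D nonzero complex numbers all of modulus in [c·h, h] for some 0 < c ≤ 1 and h > 0, and suppose that for some index set 𝒟 ⊆ {0,1,...,D} containing 0 and D, with |𝒟| = Λ + 1, we have |S_j(T)| ≤ δ h^j for all j ∉ 𝒟, 0 ≤ j ≤ D. Then, for δ and ε sufficiently small depending only on D, c, and 𝒟: for any w ∈ T, the ball B(w, ε h) contains at most Λ elements of T (counted with multiplicity). -/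
open Finset Polynomial

theorem exists_sum_mul_choose_eq {K : Type*} [Field K] [CharZero K] (s : Finset ℕ) {n : ℕ}
    (hs : s.card ≤ n) (r : ℕ → K) :
    ∃ a : ℕ → K, ∀ k ∈ s, ∑ i ∈ range n, a i * k.choose i = r k := by
  -- Newton's forward-difference formula for the Lagrange interpolant `p` of `r` on `s`
  set p := Lagrange.interpolate s (Nat.cast : ℕ → K) r
  have hinj : Set.InjOn (Nat.cast : ℕ → K) s := Nat.cast_injective.injOn
  refine ⟨fun i => (fwdDiff 1)^[i] p.eval 0, fun k hk => ?_⟩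
  have hp : p.natDegree < n := by
    rcases eq_or_ne p 0 with h | h
    · rw [h, natDegree_zero]
      exact (card_pos.2 ⟨k, hk⟩).trans_le hs
    · exact (natDegree_lt_iff_degree_lt h).2 <|
        (Lagrange.degree_interpolate_lt r hinj).trans_le (by exact_mod_cast hs)
  have hterm : ∀ i ∉ range n ∩ range (k + 1), (fwdDiff 1)^[i] p.eval 0 * k.choose i = 0 := by
    intro i hi
    rcases le_or_gt n i with hni | hin
    · obtain ⟨j, rfl⟩ := Nat.exists_eq_add_of_le hni
      rw [add_comm, Function.iterate_add_apply, fwdDiff_iter_eq_zero_of_degree_lt hp,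
        Function.iterate_fixed (x := (0 : K → K)) (fwdDiff_const 1 0), Pi.zero_apply, zero_mul]
    · have : k < i := by simpa [hin] using hi
      simp [Nat.choose_eq_zero_of_lt this]
  calc ∑ i ∈ range n, (fwdDiff 1)^[i] p.eval 0 * k.choose i
      = ∑ i ∈ range (k + 1), k.choose i • (fwdDiff 1)^[i] p.eval 0 := by
        simp_rw [nsmul_eq_mul, mul_comm (k.choose _ : K)]
        rw [← sum_subset inter_subset_left fun i _ hi => hterm i hi,
          sum_subset inter_subset_right fun i _ hi => hterm i hi]
    _ = p.eval ((0 : K) + k • 1) := (shift_eq_sum_fwdDiff_iter 1 p.eval k 0).symm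
    _ = p.eval (k : K) := by rw [zero_add, nsmul_one]
    _ = r k := Lagrange.eval_interpolate_at_node r hinj hk

theorem pow_mul_taylor_coeff {R : Type*} [CommSemiring R] (P : R[X]) (w : R) (i : ℕ) {N : ℕ}
    (hN : P.natDegree < N) :
    w ^ i * (taylor w P).coeff i = ∑ k ∈ range N, k.choose i * P.coeff k * w ^ k := by
  rw [taylor_coeff, hasseDeriv_apply, eval_sum, Polynomial.sum_def, mul_sum,
    ← sum_over_range' P (f := fun k a => (k.choose i : R) * a * w ^ k) (by simp) N hN,
    Polynomial.sum_def]
  refine sum_congr rfl fun k _ => ?_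
  rcases le_or_gt i k with hik | hki
  · rw [eval_monomial, ← mul_assoc, mul_comm (w ^ i), mul_assoc, pow_mul_pow_sub w hik]
  · simp [Nat.choose_eq_zero_of_lt hki]

theorem sum_sum_mul_choose_mul_coeff_mul_pow {R : Type*} [CommSemiring R] (P : R[X]) (w : R)
    (a : ℕ → R) (n : ℕ) {N : ℕ} (hN : P.natDegree < N) :
    ∑ k ∈ range N, (∑ i ∈ range n, a i * k.choose i) * P.coeff k * w ^ k
      = ∑ i ∈ range n, a i * (w ^ i * (taylor w P).coeff i) := by
  simp_rw [pow_mul_taylor_coeff P w _ hN, mul_sum, sum_mul]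
  rw [sum_comm]
  refine sum_congr rfl fun i _ => sum_congr rfl fun k _ => by ring

theorem Polynomial.Monic.pow_natDegree_eq_sum_taylor_sub_sum {R : Type*} [CommRing R]
    {P : R[X]} (hP : P.Monic) (w : R) (a : ℕ → R) (n : ℕ) {s : Finset ℕ}
    (hs : s ⊆ range (P.natDegree + 1)) (hDs : P.natDegree ∈ s)
    (ha : ∀ k ∈ s, ∑ i ∈ range n, a i * k.choose i = if k = P.natDegree then 1 else 0) :
    w ^ P.natDegree = ∑ i ∈ range n, a i * (w ^ i * (taylor w P).coeff i)
      - ∑ k ∈ range (P.natDegree + 1) \ s,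
          (∑ i ∈ range n, a i * k.choose i) * P.coeff k * w ^ k := by
  rw [← sum_sum_mul_choose_mul_coeff_mul_pow P w a n (Nat.lt_succ_self _), ← sum_sdiff hs,
    add_sub_cancel_left, sum_congr rfl fun k hk => by rw [ha k hk]]
  simp [hDs, hP.coeff_natDegree]

theorem Multiset.norm_prod_le_pow_card {𝕜 : Type*} [SeminormedCommRing 𝕜] [NormOneClass 𝕜]
    {V : Multiset 𝕜} {R : ℝ} (hR : ∀ y ∈ V, ‖y‖ ≤ R) : ‖V.prod‖ ≤ R ^ card V := by
  induction V using Multiset.induction_on with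
  | empty => simp
  | cons a V ih =>
    rw [prod_cons, card_cons, pow_succ']
    have ha := hR a (mem_cons_self a V)
    exact (norm_mul_le _ _).trans <| mul_le_mul ha (ih fun y hy => hR y (mem_cons_of_mem hy))
      (norm_nonneg _) ((norm_nonneg a).trans ha)

theorem Multiset.norm_esymm_le {𝕜 : Type*} [SeminormedCommRing 𝕜] [NormOneClass 𝕜]
    {U : Multiset 𝕜} {k : ℕ} {R η : ℝ} (hR : ∀ y ∈ U, ‖y‖ ≤ R)
    (hsmall : card U < k + U.countP (‖·‖ ≤ η)) :
    ‖U.esymm k‖ ≤ (card U).choose k * (η * R ^ (k - 1)) := by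
  classical
  rw [esymm, ← card_powersetCard, ← card_map prod, ← nsmul_eq_mul]
  refine (norm_multiset_sum_le _).trans ?_
  rw [← card_map norm]
  refine sum_le_card_nsmul _ _ fun x hx => ?_
  obtain ⟨V, hV, rfl⟩ := Multiset.mem_map.1 (by simpa only [map_map] using hx)
  obtain ⟨hVU, hVk⟩ := mem_powersetCard.1 hV
  have hcount : 0 < V.countP (‖·‖ ≤ η) := by
    have hsplit :
        U.countP (‖·‖ ≤ η) = (U - V).countP (‖·‖ ≤ η) + V.countP (‖·‖ ≤ η) := by
      rw [← countP_add, tsub_add_cancel_of_le hVU]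
    have hrest := countP_le_card (‖·‖ ≤ η) (U - V)
    rw [card_sub hVU] at hrest
    have := card_le_card hVU
    omega
  obtain ⟨y, hyV, hy⟩ := countP_pos.1 hcount
  obtain ⟨V', rfl⟩ := exists_cons_of_mem hyV
  rw [Function.comp_apply, prod_cons, ← hVk, card_cons, Nat.add_sub_cancel]
  exact (norm_mul_le _ _).trans <| mul_le_mul hy
    (norm_prod_le_pow_card fun z hz => hR z (mem_of_le hVU (mem_cons_of_mem hz)))
    (norm_nonneg _) ((norm_nonneg y).trans hy)

theorem coeff_taylor_prod_X_sub_C {R : Type*} [CommRing R] (T : Multiset R) (w : R) {i : ℕ}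
    (hi : i ≤ Multiset.card T) :
    (taylor w (T.map fun z => X - C z).prod).coeff i
      = (-1) ^ (Multiset.card T - i) * (T.map (· - w)).esymm (Multiset.card T - i) := by
  have : taylor w (T.map fun z => X - C z).prod
      = ((T.map (· - w)).map fun z => X - C z).prod := by
    rw [taylor_apply, multiset_prod_comp, Multiset.map_map, Multiset.map_map]
    congr 1
    refine Multiset.map_congr rfl fun z _ => ?_
    simp only [Function.comp_apply, sub_comp, X_comp, C_comp, C_sub]
    ring
  rw [this, Multiset.prod_X_sub_C_coeff _ (by rwa [Multiset.card_map]), Multiset.card_map]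

theorem norm_coeff_taylor_prod_X_sub_C_le {𝕜 : Type*} [NormedCommRing 𝕜] [NormOneClass 𝕜]
    (T : Multiset 𝕜) (w : 𝕜) {R ε : ℝ} (hR : ∀ z ∈ T, ‖z - w‖ ≤ R) {i : ℕ}
    (hi : i < T.countP (‖· - w‖ ≤ ε)) :
    ‖(taylor w (T.map fun z => X - C z).prod).coeff i‖
      ≤ (Multiset.card T).choose (Multiset.card T - i)
          * (ε * R ^ (Multiset.card T - i - 1)) := by
  have hiT : i ≤ Multiset.card T := hi.le.trans (Multiset.countP_le_card _ _)
  have hsign : ∀ x : 𝕜, ‖(-1) ^ (Multiset.card T - i) * x‖ = ‖x‖ := fun x => by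
    rcases neg_one_pow_eq_or 𝕜 (Multiset.card T - i) with h | h <;> simp [h]
  rw [coeff_taylor_prod_X_sub_C T w hiT, hsign, ← Multiset.card_map (· - w) T]
  refine Multiset.norm_esymm_le (by simpa using hR) ?_
  rw [Multiset.countP_map, ← Multiset.countP_eq_card_filter]
  omega

theorem S_eq_esymm (A : Multiset ℂ) (j : ℕ) : S A j = (A.map Neg.neg).esymm j := rfl

theorem coeff_prod_X_sub_C_eq_S (T : Multiset ℂ) {k : ℕ} (hk : k ≤ Multiset.card T) :
    (T.map fun z => X - C z).prod.coeff k = S T (Multiset.card T - k) := by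
  rw [Multiset.prod_X_sub_C_coeff T hk, S_eq_esymm, Multiset.esymm_neg]

theorem Multiset.esymm_map_const_mul {R : Type*} [CommSemiring R] (s : Multiset R) (t : R)
    (k : ℕ) : (s.map (t * ·)).esymm k = t ^ k * s.esymm k := by
  rw [esymm, esymm, powersetCard_map, map_map, ← sum_map_mul_left]
  refine congrArg sum (map_congr rfl fun V hV => ?_)
  rw [Function.comp_apply, ← (mem_powersetCard.1 hV).2, ← prod_replicate, ← map_const']
  exact (prod_map_mul (f := fun _ => t) (g := fun x => x)).trans (by rw [map_id'])

theorem S_map_const_mul (A : Multiset ℂ) (t : ℂ) (j : ℕ) :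
    S (A.map (t * ·)) j = t ^ j * S A j := by
  rw [S_eq_esymm, S_eq_esymm, Multiset.map_map, ← Multiset.esymm_map_const_mul, Multiset.map_map]
  congr 2
  ext z
  simp

theorem norm_pow_card_le_of_cluster (T : Multiset ℂ) (hT : ∀ z ∈ T, ‖z‖ ≤ 1) {w : ℂ}
    (hw : w ∈ T) {𝒟 : Finset ℕ} (h0 : 0 ∈ 𝒟) {n : ℕ} {a : ℕ → ℂ}
    (ha : ∀ k ∈ (range (Multiset.card T + 1)).filter (Multiset.card T - · ∈ 𝒟),
      ∑ i ∈ range n, a i * k.choose i = if k = Multiset.card T then 1 else 0)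
    {ε δ : ℝ} (hδ : 0 ≤ δ) (hcl : n ≤ T.countP (‖· - w‖ ≤ ε))
    (hS : ∀ j ≤ Multiset.card T, j ∉ 𝒟 → ‖S T j‖ ≤ δ) :
    ‖w‖ ^ Multiset.card T
      ≤ (∑ i ∈ range n, ‖a i‖ * ((Multiset.card T).choose (Multiset.card T - i)
            * 2 ^ (Multiset.card T - i - 1))) * ε
        + (∑ k ∈ range (Multiset.card T + 1), ‖∑ i ∈ range n, a i * k.choose i‖) * δ := by
  set D := Multiset.card T
  set P : ℂ[X] := (T.map fun z => X - C z).prod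
  have hdeg : P.natDegree = D := natDegree_multiset_prod_X_sub_C_eq_card T
  have hP : P.Monic := monic_multiset_prod_of_monic _ _ fun z _ => monic_X_sub_C z
  have key := hP.pow_natDegree_eq_sum_taylor_sub_sum w a n
    (s := (range (D + 1)).filter (D - · ∈ 𝒟)) (by rw [hdeg]; exact filter_subset _ _)
    (by simp [hdeg, h0]) (by simpa only [hdeg] using ha)
  have hw1 (m : ℕ) : ‖w‖ ^ m ≤ 1 := pow_le_one₀ (norm_nonneg w) (hT w hw)
  rw [hdeg] at key
  rw [← norm_pow, key]
  refine (norm_sub_le _ _).trans (add_le_add ?_ ?_)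
  · rw [sum_mul]
    refine (norm_sum_le _ _).trans (sum_le_sum fun i hi => ?_)
    have hcoeff := norm_coeff_taylor_prod_X_sub_C_le T w (R := 2)
      (fun z hz => (norm_sub_le z w).trans (by linarith [hT z hz, hT w hw]))
      ((mem_range.1 hi).trans_le hcl)
    rw [norm_mul, norm_mul, norm_pow, mul_assoc]
    refine mul_le_mul_of_nonneg_left ?_ (norm_nonneg _)
    calc ‖w‖ ^ i * ‖(taylor w P).coeff i‖ ≤ ‖(taylor w P).coeff i‖ :=
          mul_le_of_le_one_left (norm_nonneg _) (hw1 _)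
      _ ≤ _ := hcoeff.trans_eq (by ring)
  · rw [sum_mul]
    refine (norm_sum_le _ _).trans <| (sum_le_sum fun k hk => ?_).trans <|
      sum_le_sum_of_subset_of_nonneg sdiff_subset fun k _ _ => by positivity
    obtain ⟨hkD, hk𝒟⟩ : k ≤ D ∧ (k ≤ D → D - k ∉ 𝒟) := by
      simpa [Nat.lt_succ_iff] using hk
    rw [norm_mul, norm_mul, norm_pow, mul_assoc]
    refine mul_le_mul_of_nonneg_left ?_ (norm_nonneg _)
    calc ‖P.coeff k‖ * ‖w‖ ^ k ≤ ‖P.coeff k‖ :=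
          mul_le_of_le_one_right (norm_nonneg _) (hw1 _)
      _ ≤ δ := by
          rw [coeff_prod_X_sub_C_eq_S T hkD]
          exact hS _ (Nat.sub_le D k) (hk𝒟 hkD)

theorem exists_forall_card_cluster_le_of_norm_le_one (D Λ : ℕ) (c : ℝ) (𝒟 : Finset ℕ)
    (hc0 : 0 < c) (h0 : 0 ∈ 𝒟) (hcard : 𝒟.card = Λ + 1) :
    ∃ δ : ℝ, 0 < δ ∧ ∃ ε : ℝ, 0 < ε ∧
      ∀ T : Multiset ℂ, Multiset.card T = D → (∀ z ∈ T, c ≤ ‖z‖ ∧ ‖z‖ ≤ 1) →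
        (∀ j ≤ D, j ∉ 𝒟 → ‖S T j‖ ≤ δ) →
        ∀ w ∈ T, Multiset.card (T.filter (‖· - w‖ < ε)) ≤ Λ := by
  set s := (range (D + 1)).filter (D - · ∈ 𝒟)
  have hs : s.card ≤ Λ + 1 := hcard ▸ card_le_card_of_injOn (D - ·)
    (fun k hk => (mem_filter.1 hk).2)
    fun k hk l hl hkl => by
      simp only [s, coe_filter, mem_range, Set.mem_ofPred_eq] at hk hl hkl
      omega
  obtain ⟨a, ha⟩ := exists_sum_mul_choose_eq (K := ℂ) s hs fun k => if k = D then 1 else 0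
  have hcD : 0 < c ^ D / 2 := by positivity
  obtain ⟨ε, hε, hAε⟩ := exists_pos_mul_lt hcD
    (∑ i ∈ range (Λ + 1), ‖a i‖ * (D.choose (D - i) * 2 ^ (D - i - 1)))
  obtain ⟨δ, hδ, hBδ⟩ := exists_pos_mul_lt hcD
    (∑ k ∈ range (D + 1), ‖∑ i ∈ range (Λ + 1), a i * k.choose i‖)
  refine ⟨δ, hδ, ε, hε, fun T hTD hT hS w hw => ?_⟩
  subst hTD
  by_contra! hcl
  have hcount : Λ + 1 ≤ T.countP (‖· - w‖ ≤ ε) := by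
    rw [Multiset.countP_eq_card_filter]
    exact hcl.trans_le <| Multiset.card_le_card <|
      Multiset.monotone_filter_right _ fun z hz => hz.le
  have hbound :=
    norm_pow_card_le_of_cluster T (fun z hz => (hT z hz).2) hw h0 (a := a) ha hδ.le hcount hS
  have hlow : c ^ Multiset.card T ≤ ‖w‖ ^ Multiset.card T := by gcongr; exact (hT w hw).1
  linarith

open scoped Classical in
theorem stmt16_general (D Λ : ℕ) (c : ℝ) (𝒟 : Finset ℕ)
    (hc0 : 0 < c)
    (h0 : 0 ∈ 𝒟)
    (hcard : 𝒟.card = Λ + 1) :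
    ∃ δ : ℝ, 0 < δ ∧ ∃ ε : ℝ, 0 < ε ∧
      ∀ (T : Multiset ℂ) (h : ℝ), 0 < h → Multiset.card T = D →
        (∀ z ∈ T, z ≠ 0 ∧ c * h ≤ ‖z‖ ∧ ‖z‖ ≤ h) →
        (∀ j, j ≤ D → j ∉ 𝒟 → ‖S T j‖ ≤ δ * h ^ j) →
        ∀ w ∈ T,
          Multiset.card (T.filter (fun z => ‖z - w‖ < ε * h)) ≤ Λ := by
  obtain ⟨δ, hδ, ε, hε, hunit⟩ :=
    exists_forall_card_cluster_le_of_norm_le_one D Λ c 𝒟 hc0 h0 hcard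
  refine ⟨δ, hδ, ε, hε, fun T h hh hTD hT hS w hw => ?_⟩
  have hnorm (z : ℂ) : ‖(h : ℂ)⁻¹ * z‖ = ‖z‖ / h := by
    rw [norm_mul, norm_inv, Complex.norm_real, Real.norm_of_nonneg hh.le, inv_mul_eq_div]
  have hT₁ : ∀ z ∈ T.map ((h : ℂ)⁻¹ * ·), c ≤ ‖z‖ ∧ ‖z‖ ≤ 1 := by
    simp only [Multiset.mem_map, forall_exists_index, and_imp, forall_apply_eq_imp_iff₂, hnorm]
    intro z hz
    obtain ⟨-, hlo, hhi⟩ := hT z hz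
    exact ⟨(le_div_iff₀ hh).2 hlo, (div_le_one hh).2 hhi⟩
  have hS₁ : ∀ j ≤ D, j ∉ 𝒟 → ‖S (T.map ((h : ℂ)⁻¹ * ·)) j‖ ≤ δ := fun j hj hj𝒟 => by
    rw [S_map_const_mul, norm_mul, norm_pow, norm_inv, Complex.norm_real,
      Real.norm_of_nonneg hh.le, inv_pow, inv_mul_le_iff₀ (by positivity), mul_comm]
    exact hS j hj hj𝒟
  have hcluster := hunit _ (by rw [Multiset.card_map, hTD]) hT₁ hS₁ _
    (Multiset.mem_map_of_mem _ hw)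
  rw [Multiset.filter_map, Multiset.card_map] at hcluster
  refine le_of_eq_of_le (congrArg _ (Multiset.filter_congr fun z _ => ?_)) hcluster
  rw [Function.comp_apply, ← mul_sub, hnorm, div_lt_iff₀ hh]

open scoped Classical in
/-- Single-tier clustering theorem: let `T` be a multiset of `D` nonzero complex
numbers of modulus in `[c·h, h]`, and suppose `|S_j(T)| ≤ δ h^j` for all
`j ∉ 𝒟 ⊆ {0,...,D}` with `0, D ∈ 𝒟` and `|𝒟| = Λ + 1`. Then for `δ, ε` small
enough depending only on `D`, `c`, `𝒟`, every ball `B(w, εh)` about `w ∈ T`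
contains at most `Λ` elements of `T` (with multiplicity). -/
theorem stmt16 (D Λ : ℕ) (c : ℝ) (𝒟 : Finset ℕ)
    (hc0 : 0 < c) (hc1 : c ≤ 1)
    (h𝒟 : 𝒟 ⊆ Finset.range (D + 1)) (h0 : 0 ∈ 𝒟) (hD : D ∈ 𝒟)
    (hcard : 𝒟.card = Λ + 1) :
    ∃ δ : ℝ, 0 < δ ∧ ∃ ε : ℝ, 0 < ε ∧
      ∀ (T : Multiset ℂ) (h : ℝ), 0 < h → Multiset.card T = D →
        (∀ z ∈ T, z ≠ 0 ∧ c * h ≤ ‖z‖ ∧ ‖z‖ ≤ h) →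
        (∀ j, j ≤ D → j ∉ 𝒟 → ‖S T j‖ ≤ δ * h ^ j) →
        ∀ w ∈ T,
          Multiset.card (T.filter (fun z => ‖z - w‖ < ε * h)) ≤ Λ :=
  stmt16_general D Λ c 𝒟 hc0 h0 hcard
end
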